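/- Let A and B be integers with 1 ≤ A ≤ B, and let P be the generating function of the set of Dyck paths none of whose down-run lengths lies in the arithmetic progression {A·r + B : r ≥ 0}. Then, as formal power series, P + z^B·P^B = Σ_{0 ≤ k < A} z^k·P^k + z^A·P^{A+1}. -/

import Mathlib

/-- The height of a path (list of up/down steps, `true` = up = +1, `false` = down = −1)
after its first `k` steps. -/
def heightAt (p : List Bool) (k : ℕ) : ℤ :=
  ((p.take k).count true : ℤ) - ((p.take k).count false : ℤ)

/-- A Dyck path: all partial sums nonnegative and total sum zero. -/
def IsDyck (p : List Bool) : Prop :=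
  (∀ k, 0 ≤ heightAt p k) ∧ heightAt p p.length = 0

/-- A peak at height `h`: an up-step immediately followed by a down-step,
the height after the up-step being `h`. -/
def HasPeakAt (p : List Bool) (h : ℤ) : Prop :=
  ∃ i, p[i]? = some true ∧ p[i+1]? = some false ∧ heightAt p (i+1) = h

/-- A valley at height `h`: a down-step immediately followed by an up-step,
the height after the down-step being `h`. -/
def HasValleyAt (p : List Bool) (h : ℤ) : Prop :=
  ∃ i, p[i]? = some false ∧ p[i+1]? = some true ∧ heightAt p (i+1) = h

/-- `p` has an up-run of length `m`: a maximal block of exactly `m` consecutive up-steps. -/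
def HasUpRun (p : List Bool) (m : ℕ) : Prop :=
  ∃ i, (∀ j, j < m → p[i+j]? = some true) ∧
    (i = 0 ∨ p[i-1]? = some false) ∧
    (p[i+m]? = some false ∨ i + m = p.length)

/-- `p` has a down-run of length `m`: a maximal block of exactly `m` consecutive down-steps. -/
def HasDownRun (p : List Bool) (m : ℕ) : Prop :=
  ∃ i, (∀ j, j < m → p[i+j]? = some false) ∧
    (i = 0 ∨ p[i-1]? = some true) ∧
    (p[i+m]? = some true ∨ i + m = p.length)

/-- Generating function of the set of Dyck paths satisfying `Q`:
the coefficient of `z^n` is the number of such paths of semilength `n`. -/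
noncomputable def genFun (Q : List Bool → Prop) : PowerSeries ℕ :=
  PowerSeries.mk fun n => Set.ncard {p : List Bool | p.length = 2 * n ∧ IsDyck p ∧ Q p}

/-!
Cutting a Dyck path at the last visits to the heights `0, 1, …, m - 1` before its final
descent `dᵐ` writes it uniquely as `w₁ u w₂ u ⋯ wₘ u dᵐ` with Dyck paths `wᵢ`. Its down-runs are
those of the `wᵢ` together with `m` (when `m > 0`), so with `F = {A r + B}` we get
`P = ∑_{m ∉ F} zᵐ Pᵐ`. Multiplying by `z^A P^A` shifts the index set by `A`; since
`F + A = F \ {B}` and no `m < A ≤ B` lies in `F`, comparing the two sums gives the identity.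
-/

open List

def height (p : List Bool) : ℤ := (p.count true : ℤ) - (p.count false : ℤ)

lemma heightAt_eq_height_take (p : List Bool) (k : ℕ) : heightAt p k = height (p.take k) := rfl

lemma height_cons (b : Bool) (p : List Bool) :
    height (b :: p) = (if b then 1 else -1) + height p := by
  cases b <;> simp [height] <;> ring

lemma height_append (p q : List Bool) : height (p ++ q) = height p + height q := by
  simp only [height, count_append]; push_cast; ring

lemma height_replicate_false (m : ℕ) : height (replicate m false) = -m := by
  simp [height, count_replicate]

lemma heightAt_of_length_le (p : List Bool) {k : ℕ} (h : p.length ≤ k) :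
    heightAt p k = height p := by
  rw [heightAt_eq_height_take, take_of_length_le h]

lemma heightAt_zero (p : List Bool) : heightAt p 0 = 0 := rfl

lemma heightAt_cons_succ (b : Bool) (p : List Bool) (k : ℕ) :
    heightAt (b :: p) (k + 1) = (if b then 1 else -1) + heightAt p k := by
  rw [heightAt_eq_height_take, take_succ_cons, height_cons]; rfl

lemma heightAt_append_of_le (p q : List Bool) {k : ℕ} (h : k ≤ p.length) :
    heightAt (p ++ q) k = heightAt p k := by
  rw [heightAt_eq_height_take, take_append, Nat.sub_eq_zero_of_le h, take_zero, append_nil]; rfl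

lemma heightAt_append_length_add (p q : List Bool) (k : ℕ) :
    heightAt (p ++ q) (p.length + k) = height p + heightAt q k := by
  rw [heightAt_eq_height_take, take_append, take_of_length_le (by omega), height_append,
    Nat.add_sub_cancel_left]; rfl

lemma IsDyck.height_eq_zero {p : List Bool} (hp : IsDyck p) : height p = 0 := by
  rw [← heightAt_of_length_le p le_rfl]; exact hp.2

lemma IsDyck.length_eq {p : List Bool} (hp : IsDyck p) : p.length = 2 * p.count true := by
  have h := hp.height_eq_zero
  have := count_true_add_count_false p
  simp only [height] at h
  omega

/-- `downRunsFrom p c` lists the lengths of the down-runs of `replicate c false ++ p`. -/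
def downRunsFrom : List Bool → ℕ → List ℕ
  | [], c => if c = 0 then [] else [c]
  | true :: l, c => (if c = 0 then [] else [c]) ++ downRunsFrom l 0
  | false :: l, c => downRunsFrom l (c + 1)

def downRuns (p : List Bool) : List ℕ := downRunsFrom p 0

@[simp] lemma downRuns_nil : downRuns [] = [] := rfl

@[simp] lemma downRuns_cons_true (l : List Bool) : downRuns (true :: l) = downRuns l := by
  simp [downRuns, downRunsFrom]

lemma downRunsFrom_append_true (p q : List Bool) (c : ℕ) :
    downRunsFrom (p ++ true :: q) c = downRunsFrom p c ++ downRuns q := by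
  induction p generalizing c with
  | nil => simp [downRunsFrom, downRuns]
  | cons b p ih => cases b <;> simp [downRunsFrom, ih]

lemma downRunsFrom_replicate_false_append (m c : ℕ) (l : List Bool) :
    downRunsFrom (replicate m false ++ l) c = downRunsFrom l (c + m) := by
  induction m generalizing c with
  | zero => rfl
  | succ m ih => rw [replicate_succ, cons_append, downRunsFrom, ih]; ring_nf

lemma downRuns_replicate_false (m : ℕ) :
    downRuns (replicate m false) = if m = 0 then [] else [m] := by
  simpa [downRuns, downRunsFrom] using downRunsFrom_replicate_false_append m 0 []

lemma downRunsFrom_of_head?_ne {l : List Bool} {c : ℕ} (hc : c ≠ 0)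
    (hl : l.head? ≠ some false) : downRunsFrom l c = c :: downRuns l := by
  match l, hl with
  | [], _ => simp [downRunsFrom, hc]
  | true :: l, _ => simp [downRunsFrom, hc, downRuns]

lemma not_hasDownRun_nil {k : ℕ} (hk : k ≠ 0) : ¬ HasDownRun [] k := by
  rintro ⟨i, hrun, -, -⟩
  simpa using hrun 0 (by omega)

lemma hasDownRun_cons_true {l : List Bool} {k : ℕ} (hk : k ≠ 0) :
    HasDownRun (true :: l) k ↔ HasDownRun l k := by
  constructor
  · rintro ⟨_ | i, hrun, hstart, hend⟩
    · simpa using hrun 0 (by omega)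
    · refine ⟨i, fun j hj => ?_, ?_, ?_⟩
      · simpa [Nat.add_right_comm] using hrun j hj
      · rcases i with _ | i <;> simp_all
      · simpa [Nat.add_right_comm] using hend
  · rintro ⟨i, hrun, hstart, hend⟩
    refine ⟨i + 1, fun j hj => ?_, ?_, ?_⟩
    · simpa [Nat.add_right_comm] using hrun j hj
    · rcases i with _ | i <;> simp_all
    · simpa [Nat.add_right_comm] using hend

lemma getElem?_replicate_false_append (j t : ℕ) (q : List Bool) :
    (replicate j false ++ q)[t]? = if t < j then some false else q[t - j]? := by
  split_ifs with h
  · simp [getElem?_append_left (show t < (replicate j false).length by simpa using h), h]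
  · rw [getElem?_append_right (by simp; omega), length_replicate]

lemma hasDownRun_replicate_false_append_self {j : ℕ} {q : List Bool}
    (hq : q.head? ≠ some false) : HasDownRun (replicate j false ++ q) j := by
  refine ⟨0, fun t ht => by simp [getElem?_replicate_false_append, ht], Or.inl rfl, ?_⟩
  rw [head?_eq_getElem?] at hq
  simp only [getElem?_replicate_false_append, zero_add, lt_irrefl, if_false, Nat.sub_self,
    length_append, length_replicate]
  rcases hq' : q[0]? with _ | b
  · simp_all
  · cases b <;> simp_all

lemma hasDownRun_replicate_false_append {j k : ℕ} (hk : k ≠ 0) {q : List Bool}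
    (hq : q.head? ≠ some false) :
    HasDownRun (replicate j false ++ q) k ↔ k = j ∨ HasDownRun q k := by
  refine ⟨fun h => ?_, fun h => h.elim (· ▸ hasDownRun_replicate_false_append_self hq) fun h => ?_⟩
  all_goals
    rw [head?_eq_getElem?] at hq
    simp only [HasDownRun, getElem?_replicate_false_append, length_append, length_replicate] at h ⊢
  · obtain ⟨i, hrun, hstart, hend⟩ := h
    by_cases hij : i < j
    · left
      obtain rfl : i = 0 := by
        rcases hstart with h | h
        · exact h
        · simp [show i - 1 < j by omega] at h
      have hkj : k ≤ j := by
        by_contra h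
        exact hq (by simpa using hrun j (by omega))
      rcases hend with h | h
      · by_contra hne
        simp [show k < j by omega] at h
      · omega
    · have hji : j < i := by
        by_contra h
        exact hq (by simpa [show i = j by omega] using hrun 0 (by omega))
      right
      refine ⟨i - j, fun t ht => ?_, ?_, ?_⟩
      · simpa [show ¬ i + t < j by omega, show i + t - j = i - j + t by omega] using hrun t ht
      · right
        simpa [show ¬ i - 1 < j by omega, show i - 1 - j = i - j - 1 by omega] using
          hstart.resolve_left (by omega)
      · simpa [show ¬ i + k < j by omega, show i + k - j = i - j + k by omega,
          show i + k = j + q.length ↔ i - j + k = q.length by omega] using hend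
  · obtain ⟨i, hrun, hstart, hend⟩ := h
    have hi : i ≠ 0 := by
      rintro rfl
      exact hq (by simpa using hrun 0 (by omega))
    refine ⟨j + i, fun t ht => ?_, ?_, ?_⟩
    · simpa [show ¬ j + i + t < j by omega, show j + i + t - j = i + t by omega] using hrun t ht
    · simpa [show ¬ j + i - 1 < j by omega, show j + i - 1 - j = i - 1 by omega, hi] using hstart
    · simpa [show j + i + k - j = i + k by omega, Nat.add_assoc] using hend

lemma exists_eq_replicate_false_append (p : List Bool) :
    ∃ j d, p = replicate j false ++ d ∧ d.head? ≠ some false := by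
  induction p with
  | nil => exact ⟨0, [], rfl, by simp⟩
  | cons b l ih =>
    cases b
    · obtain ⟨j, d, rfl, hd⟩ := ih
      exact ⟨j + 1, d, rfl, hd⟩
    · exact ⟨0, true :: l, rfl, by simp⟩

theorem hasDownRun_iff_mem_downRuns {k : ℕ} (hk : k ≠ 0) :
    ∀ p : List Bool, HasDownRun p k ↔ k ∈ downRuns p
  | [] => by simp [not_hasDownRun_nil hk]
  | true :: l => by
    rw [hasDownRun_cons_true hk, downRuns_cons_true, hasDownRun_iff_mem_downRuns hk l]
  | false :: l => by
    obtain ⟨j, d, hl, hd⟩ := exists_eq_replicate_false_append l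
    have hlen : d.length < (false :: l).length := by simp [hl] -- for `termination_by`
    rw [show false :: l = replicate (j + 1) false ++ d by rw [hl]; rfl,
      hasDownRun_replicate_false_append hk hd, downRuns,
      downRunsFrom_replicate_false_append, zero_add, downRunsFrom_of_head?_ne (by omega) hd,
      mem_cons, hasDownRun_iff_mem_downRuns hk d]
termination_by p => p.length

def NonnegHeights (p : List Bool) : Prop := ∀ k, 0 ≤ heightAt p k

lemma isDyck_iff_nonnegHeights {p : List Bool} : IsDyck p ↔ NonnegHeights p ∧ height p = 0 := by
  rw [IsDyck, heightAt_of_length_le p le_rfl]; rfl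

lemma NonnegHeights.append {p q : List Bool} (hp : NonnegHeights p)
    (hq : ∀ k, 0 ≤ height p + heightAt q k) : NonnegHeights (p ++ q) := by
  intro k
  rcases le_or_gt k p.length with h | h
  · rw [heightAt_append_of_le p q h]; exact hp k
  · obtain ⟨t, rfl⟩ := Nat.exists_eq_add_of_le h.le
    rw [heightAt_append_length_add]; exact hq t

def joinWithUps (ws : List (List Bool)) : List Bool := ws.flatMap (· ++ [true])

@[simp] lemma joinWithUps_nil : joinWithUps [] = [] := rfl

lemma joinWithUps_cons (w : List Bool) (ws : List (List Bool)) :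
    joinWithUps (w :: ws) = w ++ true :: joinWithUps ws := by
  simp [joinWithUps]

lemma length_joinWithUps (ws : List (List Bool)) :
    (joinWithUps ws).length = (ws.map length).sum + ws.length := by
  induction ws with
  | nil => rfl
  | cons w ws ih => simp [joinWithUps_cons, ih]; omega

lemma getLast?_joinWithUps_ne (ws : List (List Bool)) : (joinWithUps ws).getLast? ≠ some false := by
  cases ws using List.reverseRecOn with
  | nil => simp
  | append_singleton ws w => simp [joinWithUps]

lemma height_joinWithUps {ws : List (List Bool)} (h : ∀ w ∈ ws, IsDyck w) :
    height (joinWithUps ws) = ws.length := by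
  induction ws with
  | nil => rfl
  | cons w ws ih =>
    rw [joinWithUps_cons, height_append, height_cons, (h w (by simp)).height_eq_zero,
      ih fun w hw => h w (by simp [hw]), if_pos rfl, length_cons]
    push_cast
    ring

lemma nonnegHeights_joinWithUps {ws : List (List Bool)} (h : ∀ w ∈ ws, IsDyck w) :
    NonnegHeights (joinWithUps ws) := by
  induction ws with
  | nil => intro k; simp [heightAt]
  | cons w ws ih =>
    rw [joinWithUps_cons]
    refine (isDyck_iff_nonnegHeights.1 (h w (by simp))).1.append fun k => ?_
    rw [(h w (by simp)).height_eq_zero, zero_add]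
    cases k with
    | zero => rfl
    | succ k =>
      rw [heightAt_cons_succ]
      have := ih (fun w hw => h w (by simp [hw])) k
      simp only [if_true]; omega

lemma downRuns_joinWithUps_append (ws : List (List Bool)) (q : List Bool) :
    downRuns (joinWithUps ws ++ q) = (ws.map downRuns).flatten ++ downRuns q := by
  induction ws with
  | nil => rfl
  | cons w ws ih =>
    rw [joinWithUps_cons, append_assoc, cons_append, downRuns, downRunsFrom_append_true, ih]
    simp [downRuns]

lemma length_le_of_append_true_eq {w w' r r' : List Bool} (hw : IsDyck w) (hw' : IsDyck w')
    (hr : NonnegHeights r) (h : w ++ true :: r = w' ++ true :: r') : w'.length ≤ w.length := by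
  by_contra! hlt
  obtain ⟨t, ht⟩ : ∃ t, w'.length = (w ++ [true]).length + t :=
    ⟨w'.length - w.length - 1, by simp; omega⟩
  have hzero : heightAt (w ++ true :: r) w'.length = 0 := by
    rw [h, heightAt_append_of_le _ _ le_rfl, heightAt_of_length_le _ le_rfl, hw'.height_eq_zero]
  have hpos : heightAt (w ++ true :: r) w'.length = 1 + heightAt r t := by
    rw [show w ++ true :: r = (w ++ [true]) ++ r by simp, ht, heightAt_append_length_add,
      height_append, hw.height_eq_zero]
    rfl
  have := hr t
  omega

lemma joinWithUps_injOn : Set.InjOn joinWithUps {ws | ∀ w ∈ ws, IsDyck w} := by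
  intro ws h ws' h' heq
  induction ws generalizing ws' with
  | nil => cases ws' <;> simp_all [joinWithUps_cons]
  | cons w ws ih =>
    cases ws' with
    | nil => simp [joinWithUps_cons] at heq
    | cons w' ws' =>
      rw [joinWithUps_cons, joinWithUps_cons] at heq
      have hw := h w (by simp)
      have hw' := h' w' (by simp)
      have hr := nonnegHeights_joinWithUps (ws := ws) fun v hv => h v (by simp [hv])
      have hr' := nonnegHeights_joinWithUps (ws := ws') fun v hv => h' v (by simp [hv])
      have hlen := le_antisymm (length_le_of_append_true_eq hw' hw hr' heq.symm)
        (length_le_of_append_true_eq hw hw' hr heq)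
      obtain ⟨rfl, htail⟩ := append_inj heq hlen
      rw [ih (fun v hv => h v (by simp [hv])) (fun v hv => h' v (by simp [hv]))
        (cons_inj_right true |>.1 htail)]

lemma exists_last_zero {q : List Bool} (hq : NonnegHeights q) (hpos : 0 < height q) :
    ∃ j < q.length, heightAt q j = 0 ∧ ∀ u, j < u → 1 ≤ heightAt q u := by
  set j := Nat.findGreatest (fun t => heightAt q t = 0) q.length
  have hj0 : heightAt q j = 0 := Nat.findGreatest_spec (P := fun t => heightAt q t = 0)
    (Nat.zero_le _) (heightAt_zero q)
  refine ⟨j, lt_of_le_of_ne (Nat.findGreatest_le _) fun hjL => ?_, hj0, fun u hu => ?_⟩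
  · rw [hjL, heightAt_of_length_le q le_rfl] at hj0
    omega
  · rcases le_or_gt u q.length with hu' | hu'
    · have := Nat.findGreatest_is_greatest hu hu'
      have := hq u
      omega
    · rw [heightAt_of_length_le q hu'.le]; omega

lemma exists_isDyck_append_true {q : List Bool} (hq : NonnegHeights q) (hpos : 0 < height q) :
    ∃ w r, q = w ++ true :: r ∧ IsDyck w ∧ NonnegHeights r := by
  obtain ⟨j, hjlt, hj0, hafter⟩ := exists_last_zero hq hpos
  set w := q.take j
  set r := q.drop (j + 1)
  obtain ⟨b, hq_eq⟩ : ∃ b, q = w ++ b :: r :=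
    ⟨q[j], by rw [← drop_eq_getElem_cons hjlt, take_append_drop]⟩
  have hwlen : w.length = j := length_take_of_le hjlt.le
  have hw0 : height w = 0 := by
    rw [← hj0, ← hwlen, hq_eq, heightAt_append_of_le _ _ le_rfl, heightAt_of_length_le _ le_rfl]
  have hstep : ∀ t, heightAt q (j + 1 + t) = (if b then 1 else -1) + heightAt r t := by
    intro t
    conv_lhs => rw [hq_eq, ← hwlen]
    rw [Nat.add_assoc, heightAt_append_length_add, Nat.add_comm, heightAt_cons_succ, hw0,
      zero_add]
  obtain rfl : b = true := by
    have := hafter (j + 1 + 0) (by omega)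
    rw [hstep, heightAt_zero] at this
    by_contra hc
    simp [hc] at this
  refine ⟨w, r, hq_eq, isDyck_iff_nonnegHeights.2 ⟨fun t => ?_, hw0⟩, fun t => ?_⟩
  · rcases le_or_gt t w.length with ht | ht
    · rw [← heightAt_append_of_le w (true :: r) ht, ← hq_eq]; exact hq t
    · rw [heightAt_of_length_le w ht.le, hw0]
  · have := hafter (j + 1 + t) (by omega)
    rw [hstep] at this
    simp only [if_true] at this
    omega

lemma exists_eq_joinWithUps (m : ℕ) {q : List Bool} (hq : NonnegHeights q) (hm : height q = m)
    (hlast : q.getLast? ≠ some false) :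
    ∃ ws, ws.length = m ∧ (∀ w ∈ ws, IsDyck w) ∧ joinWithUps ws = q := by
  induction m generalizing q with
  | zero =>
    refine ⟨[], rfl, by simp, ?_⟩
    cases q using List.reverseRecOn with
    | nil => rfl
    | append_singleton q b =>
      obtain rfl : b = true := by simpa using hlast
      have := hq q.length
      rw [heightAt_append_of_le _ _ le_rfl, heightAt_of_length_le _ le_rfl] at this
      rw [height_append, show height [true] = 1 from rfl] at hm
      omega
  | succ m ih =>
    obtain ⟨w, r, rfl, hw, hr⟩ := exists_isDyck_append_true hq (by omega)
    have hrm : height r = m := by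
      rw [height_append, height_cons, hw.height_eq_zero, if_pos rfl] at hm
      push_cast at hm
      omega
    obtain ⟨ws, hlen, hws, rfl⟩ := ih hr hrm fun h => hlast (by simp [getLast?_cons, h])
    refine ⟨w :: ws, by simp [hlen], ?_, joinWithUps_cons w ws⟩
    simpa [hw] using hws

/-- `glue [w₁, …, wₘ] = w₁ u w₂ u ⋯ wₘ u dᵐ`, the last-descent decomposition of a Dyck path. -/
def glue (ws : List (List Bool)) : List Bool := joinWithUps ws ++ replicate ws.length false

lemma length_glue (ws : List (List Bool)) :
    (glue ws).length = (ws.map length).sum + 2 * ws.length := by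
  simp only [glue, length_append, length_joinWithUps, length_replicate]
  omega

lemma isDyck_glue {ws : List (List Bool)} (h : ∀ w ∈ ws, IsDyck w) : IsDyck (glue ws) := by
  have hheight := height_joinWithUps h
  refine isDyck_iff_nonnegHeights.2 ⟨(nonnegHeights_joinWithUps h).append fun k => ?_, ?_⟩
  · rw [hheight, heightAt_eq_height_take, take_replicate, height_replicate_false]
    omega
  · rw [glue, height_append, hheight, height_replicate_false, add_neg_cancel]

lemma replicate_false_append_inj {m m' : ℕ} {a a' : List Bool} (ha : a.head? ≠ some false)
    (ha' : a'.head? ≠ some false) (h : replicate m false ++ a = replicate m' false ++ a') :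
    m = m' ∧ a = a' := by
  induction m generalizing m' with
  | zero => cases m' <;> simp_all [replicate_succ]
  | succ m ih =>
    cases m' with
    | zero => subst h; simp [replicate_succ] at ha'
    | succ m' =>
      simp only [replicate_succ, cons_append, cons.injEq, true_and] at h
      simpa using ih h

lemma glue_injOn : Set.InjOn glue {ws | ∀ w ∈ ws, IsDyck w} := by
  intro ws hws ws' hws' heq
  have := congrArg reverse heq
  simp only [glue, reverse_append, reverse_replicate] at this
  have hne : ∀ vs, (joinWithUps vs).reverse.head? ≠ some false := fun vs => by
    simpa using getLast?_joinWithUps_ne vs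
  exact joinWithUps_injOn hws hws'
    (reverse_inj.1 (replicate_false_append_inj (hne _) (hne _) this).2)

lemma exists_glue {p : List Bool} (hp : IsDyck p) : ∃ ws, (∀ w ∈ ws, IsDyck w) ∧ glue ws = p := by
  obtain ⟨m, d, hrev, hd⟩ := exists_eq_replicate_false_append p.reverse
  have hp_eq : p = d.reverse ++ replicate m false := by
    rw [← reverse_reverse p, hrev, reverse_append, reverse_replicate]
  rw [isDyck_iff_nonnegHeights, hp_eq] at hp
  have hm : height d.reverse = m := by
    rw [height_append, height_replicate_false] at hp; omega
  have hnonneg : NonnegHeights d.reverse := fun k => by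
    rcases le_or_gt k d.reverse.length with hk | hk
    · rw [← heightAt_append_of_le _ _ hk]; exact hp.1 k
    · rw [heightAt_of_length_le _ hk.le, hm]; positivity
  obtain ⟨ws, hlen, hws, hjoin⟩ := exists_eq_joinWithUps m hnonneg hm (by simpa using hd)
  exact ⟨ws, hws, by rw [glue, hjoin, hlen, hp_eq]⟩

def AvoidsDownRuns (F : Set ℕ) (p : List Bool) : Prop := ∀ k ∈ F, ¬ HasDownRun p k

lemma avoidsDownRuns_iff {F : Set ℕ} (hF : 0 ∉ F) (p : List Bool) :
    AvoidsDownRuns F p ↔ ∀ k ∈ downRuns p, k ∉ F := by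
  refine forall_congr' fun k => ?_
  rcases eq_or_ne k 0 with rfl | hk
  · simp [hF]
  · rw [hasDownRun_iff_mem_downRuns hk]; tauto

lemma avoidsDownRuns_glue_iff {F : Set ℕ} (hF : 0 ∉ F) (ws : List (List Bool)) :
    AvoidsDownRuns F (glue ws) ↔ (∀ w ∈ ws, AvoidsDownRuns F w) ∧ ws.length ∉ F := by
  simp only [avoidsDownRuns_iff hF, glue, downRuns_joinWithUps_append, downRuns_replicate_false,
    mem_append, mem_flatten, mem_map, exists_exists_and_eq_and, or_imp, forall_and,
    forall_exists_index, and_imp]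
  split_ifs with h
  · simp [h, hF, forall_comm (α := ℕ)]
  · simp [forall_comm (α := ℕ)]

lemma Finset.ncard_biUnion {ι α : Type*} (s : Finset ι) (f : ι → Set α)
    (hf : ∀ i ∈ s, (f i).Finite) (h : (s : Set ι).PairwiseDisjoint f) :
    (⋃ i ∈ s, f i).ncard = ∑ i ∈ s, (f i).ncard := by
  rw [← finsum_mem_coe_finset, ← s.finite_toSet.ncard_biUnion (by simpa using hf) h]
  simp

def dyckSet (Q : List Bool → Prop) (n : ℕ) : Set (List Bool) :=
  {p | p.length = 2 * n ∧ IsDyck p ∧ Q p}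

lemma coeff_genFun (Q : List Bool → Prop) (n : ℕ) :
    PowerSeries.coeff n (genFun Q) = (dyckSet Q n).ncard :=
  PowerSeries.coeff_mk _ _

lemma dyckSet_finite (Q : List Bool → Prop) (n : ℕ) : (dyckSet Q n).Finite :=
  (finite_length_eq Bool (2 * n)).subset fun _ hp => hp.1

def dyckTuples (Q : List Bool → Prop) (m s : ℕ) : Set (List (List Bool)) :=
  {ws | ws.length = m ∧ (∀ w ∈ ws, IsDyck w ∧ Q w) ∧ (ws.map length).sum = 2 * s}

lemma glue_injOn_dyckTuples (Q : List Bool → Prop) (m s : ℕ) :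
    Set.InjOn glue (dyckTuples Q m s) :=
  glue_injOn.mono fun _ hws w hw => (hws.2.1 w hw).1

lemma dyckTuples_finite (Q : List Bool → Prop) (m s : ℕ) : (dyckTuples Q m s).Finite := by
  refine Set.Finite.of_finite_image ?_ (glue_injOn_dyckTuples Q m s)
  refine (finite_length_eq Bool (2 * s + 2 * m)).subset ?_
  rintro _ ⟨ws, ⟨hlen, -, hsum⟩, rfl⟩
  simp [length_glue, hlen, hsum]

lemma dyckTuples_zero (Q : List Bool → Prop) (s : ℕ) :
    dyckTuples Q 0 s = if s = 0 then {[]} else ∅ := by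
  ext ws
  split_ifs with hs <;> simp only [dyckTuples] <;> aesop

lemma dyckTuples_succ (Q : List Bool → Prop) (m s : ℕ) :
    dyckTuples Q (m + 1) s = ⋃ ij ∈ Finset.HasAntidiagonal.antidiagonal s,
      (fun x : List Bool × List (List Bool) => x.1 :: x.2) ''
        (dyckSet Q ij.1 ×ˢ dyckTuples Q m ij.2) := by
  ext ws
  simp only [Set.mem_iUnion, Set.mem_image, Set.mem_prod, Prod.exists,
    Finset.HasAntidiagonal.mem_antidiagonal]
  constructor
  · rintro ⟨hlen, hws, hsum⟩
    obtain ⟨w, ws, rfl⟩ := exists_cons_of_length_eq_add_one hlen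
    have hw := hws w (by simp)
    have := hw.1.length_eq
    simp only [map_cons, sum_cons] at hsum
    exact ⟨w.count true, s - w.count true, by omega, w, ws,
      ⟨⟨this, hw⟩, by simpa using hlen, fun v hv => hws v (by simp [hv]), by omega⟩, rfl⟩
  · rintro ⟨i, j, hij, w, ws, ⟨⟨hw, hwd, hwq⟩, hlen, hws, hsum⟩, rfl⟩
    refine ⟨by simp [hlen], ?_, by simp [hw, hsum]; omega⟩
    simpa [hwd, hwq] using hws

lemma coeff_genFun_pow (Q : List Bool → Prop) (m s : ℕ) :
    PowerSeries.coeff s (genFun Q ^ m) = (dyckTuples Q m s).ncard := by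
  induction m generalizing s with
  | zero => rw [pow_zero, PowerSeries.coeff_one, dyckTuples_zero]; split_ifs <;> simp
  | succ m ih =>
    rw [pow_succ', PowerSeries.coeff_mul, dyckTuples_succ, Finset.ncard_biUnion]
    · refine Finset.sum_congr rfl fun ij _ => ?_
      rw [Set.ncard_image_of_injective _ fun x y h => Prod.ext_iff.2 (cons_eq_cons.1 h),
        Set.ncard_prod, coeff_genFun, ih]
    · exact fun ij _ => ((dyckSet_finite Q _).prod (dyckTuples_finite Q m _)).image _
    · intro ij hij ij' hij' hne
      refine Set.disjoint_left.2 ?_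
      rintro _ ⟨⟨w, ws⟩, ⟨hw, -⟩, rfl⟩ ⟨⟨w', ws'⟩, ⟨hw', -⟩, heq⟩
      obtain ⟨rfl, -⟩ := cons_eq_cons.1 heq
      simp only [Finset.mem_coe, Finset.HasAntidiagonal.mem_antidiagonal] at hij hij'
      have := hw.1.symm.trans hw'.1
      exact hne (Prod.ext (by omega) (by omega))

open Classical in
lemma dyckSet_avoidsDownRuns_eq_biUnion {F : Set ℕ} (hF : 0 ∉ F) (n : ℕ) :
    dyckSet (AvoidsDownRuns F) n = ⋃ m ∈ (Finset.range (n + 1)).filter (· ∉ F),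
      glue '' dyckTuples (AvoidsDownRuns F) m (n - m) := by
  ext p
  simp only [Set.mem_iUnion, Set.mem_image, Finset.mem_filter, Finset.mem_range, exists_prop]
  constructor
  · rintro ⟨hlen, hp, havoid⟩
    obtain ⟨ws, hws, rfl⟩ := exists_glue hp
    rw [avoidsDownRuns_glue_iff hF] at havoid
    rw [length_glue] at hlen
    exact ⟨ws.length, ⟨by omega, havoid.2⟩, ws,
      ⟨rfl, fun w hw => ⟨hws w hw, havoid.1 w hw⟩, by omega⟩, rfl⟩
  · rintro ⟨m, ⟨hm, hmF⟩, ws, ⟨rfl, hws, hsum⟩, rfl⟩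
    exact ⟨by rw [length_glue, hsum]; omega, isDyck_glue fun w hw => (hws w hw).1,
      (avoidsDownRuns_glue_iff hF ws).2 ⟨fun w hw => (hws w hw).2, hmF⟩⟩

open Classical PowerSeries in
theorem coeff_genFun_avoidsDownRuns {F : Set ℕ} (hF : 0 ∉ F) {n M : ℕ} (hnM : n < M) :
    coeff n (genFun (AvoidsDownRuns F)) =
      coeff n (∑ m ∈ (Finset.range M).filter (· ∉ F), X ^ m * genFun (AvoidsDownRuns F) ^ m) := by
  rw [coeff_genFun, dyckSet_avoidsDownRuns_eq_biUnion hF, Finset.ncard_biUnion, map_sum]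
  · simp only [coeff_X_pow_mul', ← Finset.sum_filter, Finset.filter_filter]
    have hfilter : (Finset.range M).filter (fun m => m ∉ F ∧ m ≤ n) =
        (Finset.range (n + 1)).filter (· ∉ F) := by
      ext m
      simp only [Finset.mem_filter, Finset.mem_range]
      exact ⟨fun ⟨_, hmF, _⟩ => ⟨by omega, hmF⟩, fun ⟨_, hmF⟩ => ⟨by omega, hmF, by omega⟩⟩
    rw [hfilter]
    refine Finset.sum_congr rfl fun m _ => ?_
    rw [(glue_injOn_dyckTuples _ m _).ncard_image, coeff_genFun_pow]
  · exact fun m _ => (dyckTuples_finite _ m _).image glue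
  · intro m _ m' _ hne
    refine Set.disjoint_left.2 ?_
    rintro _ ⟨ws, hws, rfl⟩ ⟨ws', hws', heq⟩
    have := glue_injOn (fun w hw => (hws.2.1 w hw).1) (fun w hw => (hws'.2.1 w hw).1) heq.symm
    exact hne (by rw [← hws.1, ← hws'.1, this])

def arithProg (A B : ℕ) : Set ℕ := Set.range fun r => A * r + B

section arithProg

variable {A B : ℕ}

lemma notMem_arithProg_of_lt {m : ℕ} (hm : m < B) : m ∉ arithProg A B := by
  rintro ⟨r, rfl⟩
  exact absurd hm (Nat.not_lt.2 (Nat.le_add_left _ _))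

lemma add_mem_arithProg_iff {m : ℕ} : A + m ∈ arithProg A B ↔ m ∈ arithProg A B ∨ A + m = B := by
  constructor
  · rintro ⟨_ | r, hr⟩
    · exact Or.inr (by simpa using hr.symm)
    · exact Or.inl ⟨r, by dsimp only at hr ⊢; rw [mul_add_one] at hr; omega⟩
  · rintro (⟨r, rfl⟩ | h)
    · exact ⟨r + 1, by ring⟩
    · exact ⟨0, by simpa using h.symm⟩

open Classical in
lemma sum_filter_notMem_arithProg_add {M : Type*} [AddCommMonoid M] (hA : 0 < A) (hAB : A ≤ B)
    (c : ℕ → M) {N : ℕ} (hN : B < N + A) :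
    ∑ m ∈ (Finset.range (N + A)).filter (· ∉ arithProg A B), c m + c B =
      ∑ k ∈ Finset.range A, c k + ∑ m ∈ (Finset.range N).filter (· ∉ arithProg A B), c (A + m) := by
  have hcB : c B = ∑ m ∈ Finset.range N, if m = B - A then c (A + m) else 0 := by
    rw [Finset.sum_ite_eq' _ _, if_pos (Finset.mem_range.2 (by omega)), Nat.add_sub_cancel' hAB]
  rw [Finset.sum_filter, Finset.sum_filter, add_comm N A, Finset.sum_range_add, hcB, add_assoc,
    ← Finset.sum_add_distrib]
  congr 1
  · exact Finset.sum_congr rfl fun k hk =>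
      if_pos (notMem_arithProg_of_lt (by simp at hk; omega))
  · refine Finset.sum_congr rfl fun m _ => ?_
    have hm := add_mem_arithProg_iff (A := A) (B := B) (m := m)
    have hdisj : m ∈ arithProg A B → A + m ≠ B := by
      rintro ⟨r, rfl⟩
      dsimp only
      omega
    have hB : m = B - A ↔ A + m = B := by omega
    by_cases h1 : m ∈ arithProg A B <;> by_cases h2 : A + m = B <;> simp_all

open Classical PowerSeries in
theorem PowerSeries.add_X_pow_mul_pow_eq_of_coeff_eq {R : Type*} [CommSemiring R]
    (hA : 0 < A) (hAB : A ≤ B) {P : R⟦X⟧}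
    (hP : ∀ n M, n < M →
      coeff n P = coeff n (∑ m ∈ (Finset.range M).filter (· ∉ arithProg A B), X ^ m * P ^ m)) :
    P + X ^ B * P ^ B = ∑ k ∈ Finset.range A, X ^ k * P ^ k + X ^ A * P ^ (A + 1) := by
  set c : ℕ → R⟦X⟧ := fun m => X ^ m * P ^ m
  set S : ℕ → R⟦X⟧ := fun M => ∑ m ∈ (Finset.range M).filter (· ∉ arithProg A B), c m
  ext n
  let M := n + B + 1
  have hshift : coeff n (c A * P) = coeff n (c A * S M) := by
    rw [coeff_mul, coeff_mul]
    refine Finset.sum_congr rfl fun ij hij => ?_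
    rw [hP ij.2 M ((Finset.HasAntidiagonal.antidiagonal.snd_le hij).trans_lt (by omega))]
  have hprod : c A * S M = ∑ m ∈ (Finset.range M).filter (· ∉ arithProg A B), c (A + m) := by
    simp only [S, c, Finset.mul_sum, pow_add, mul_mul_mul_comm]
  calc coeff n (P + X ^ B * P ^ B) = coeff n (S (M + A) + c B) := by
        rw [map_add, map_add, hP n (M + A) (by omega)]
    _ = coeff n (∑ k ∈ Finset.range A, c k + c A * S M) := by
        rw [hprod, sum_filter_notMem_arithProg_add hA hAB c (by omega)]
    _ = _ := by rw [map_add, map_add, ← hshift, pow_succ, ← mul_assoc]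

end arithProg

/-- For `1 ≤ A ≤ B` and `P` the generating function of Dyck paths whose down-run lengths all
avoid `{A·r + B : r ≥ 0}`: `P + z^B P^B = ∑_{0 ≤ k < A} z^k P^k + z^A P^(A+1)`. -/
theorem stmt12 (A B : ℕ) (hA : 1 ≤ A) (hAB : A ≤ B) :
    let P := genFun (fun p => ∀ r : ℕ, ¬ HasDownRun p (A * r + B))
    P + PowerSeries.X ^ B * P ^ B =
      (∑ k ∈ Finset.range A, PowerSeries.X ^ k * P ^ k) +
        PowerSeries.X ^ A * P ^ (A + 1) := by
  have hP : (fun p => ∀ r : ℕ, ¬ HasDownRun p (A * r + B)) = AvoidsDownRuns (arithProg A B) := by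
    funext p
    simp [AvoidsDownRuns, arithProg]
  have h0 : 0 ∉ arithProg A B := notMem_arithProg_of_lt (by omega)
  rw [hP]
  exact PowerSeries.add_X_pow_mul_pow_eq_of_coeff_eq hA hAB fun n M h =>
    coeff_genFun_avoidsDownRuns h0 h
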